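/- Let B be a small category and G : B → Type*, corresponding to the profunctor g : B ⇸ 1. The following are equivalent: (i) g has a left adjoint profunctor; (ii) the representable functor Hom(G, −) : [B, Type*] → Type* preserves all small colimits; (iii) the functor G * − : [Bᵒᵖ, Type*] → Type* (weighted colimit with weight G) preserves the G-weighted limit {G, Y} of the Yoneda embedding Y : B → [Bᵒᵖ, Type*]. -/

import Mathlib

open CategoryTheory Opposite

universe v u u'

variable {B : Type v} [SmallCategory B]

/-- An adjunction `f ⊣ g` in the bicategory of `Type v`-valued profunctors, where
`f : 𝟙 ⇸ B` corresponds to the presheaf `F : Bᵒᵖ ⥤ Type v` and `g : B ⇸ 𝟙` corresponds to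
the copresheaf `G : B ⥤ Type v`.  The counit `f ∘ g ⟶ 1_B` is a natural family
`ε : F(b') × G(b) → B(b', b)`, and the unit `1_𝟙 ⟶ g ∘ f` is an element of the coend
`∫^b G(b) × F(b)`, given by a representative `(b₀, g₀, x₀)`; the two triangle identities are
`tri₁` and `tri₂`. -/
structure ProfAdj (F : Bᵒᵖ ⥤ Type v) (G : B ⥤ Type v) where
  ε : ∀ {b b' : B}, F.obj (op b') → G.obj b → (b' ⟶ b)
  ε_natl : ∀ {b b' b'' : B} (h : b'' ⟶ b') (x : F.obj (op b')) (y : G.obj b),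
    ε (F.map h.op x) y = h ≫ ε x y
  ε_natr : ∀ {b b' b'' : B} (k : b ⟶ b'') (x : F.obj (op b')) (y : G.obj b),
    ε x (G.map k y) = ε x y ≫ k
  b₀ : B
  g₀ : G.obj b₀
  x₀ : F.obj (op b₀)
  tri₁ : ∀ (b : B) (x : F.obj (op b)), F.map (ε x g₀).op x₀ = x
  tri₂ : ∀ (b : B) (y : G.obj b), G.map (ε x₀ y) g₀ = y

/-- Generating relation for the coend `∫^b G(b) × H(b)`. -/
def coendBRel (G : B ⥤ Type v) (H : Bᵒᵖ ⥤ Type v) :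
    (Σ b : B, G.obj b × H.obj (op b)) → (Σ b : B, G.obj b × H.obj (op b)) → Prop :=
  fun p q => ∃ (f : p.1 ⟶ q.1) (g : G.obj p.1) (y : H.obj (op q.1)),
    p.2 = (g, H.map f.op y) ∧ q.2 = (G.map f g, y)

/-- The coend `∫^b G(b) × H(b)`, i.e. the `G`-weighted colimit of the presheaf `H`. -/
def CoendB (G : B ⥤ Type v) (H : Bᵒᵖ ⥤ Type v) : Type v :=
  Quot (coendBRel G H)

/-- Functoriality of the coend in `H`. -/
def coendBMap (G : B ⥤ Type v) {H H' : Bᵒᵖ ⥤ Type v} (α : H ⟶ H') :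
    CoendB G H → CoendB G H' :=
  Quot.map (fun p => ⟨p.1, p.2.1, α.app (op p.1) p.2.2⟩) (by
    rintro ⟨b, g, x⟩ ⟨b', g', x'⟩ ⟨f, g₁, y, h1, h2⟩
    simp only [Prod.mk.injEq] at h1 h2
    refine ⟨f, g₁, α.app (op b') y, ?_, ?_⟩
    · simp only [Prod.mk.injEq]
      refine ⟨h1.1, ?_⟩
      rw [h1.2]
      exact NatTrans.naturality_apply α f.op y
    · simp only [Prod.mk.injEq]
      exact ⟨h2.1, congrArg (α.app (op b')) h2.2⟩)

/-- The weighted colimit functor `G * − : [Bᵒᵖ, Type v] ⥤ Type v`. -/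
def coendBFunctor (G : B ⥤ Type v) : (Bᵒᵖ ⥤ Type v) ⥤ Type v where
  obj H := CoendB G H
  map α := TypeCat.ofHom (coendBMap G α)
  map_id H := by
    ext q
    induction q using Quot.ind
    rfl
  map_comp α β := by
    ext q
    induction q using Quot.ind
    rfl

/-- The unit of the `G`-weighted limit `{G, Y}` of the Yoneda embedding, whose limit object
is the presheaf `b ↦ Hom(G, B(b, −))`. -/
def isbellUnit (G : B ⥤ Type v) :
    G ⟶ yoneda ⋙ coyoneda.obj (op (coyoneda ⋙ coyoneda.obj (op G))) where
  app b := TypeCat.ofHom fun g =>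
    { app := fun _ => TypeCat.ofHom fun η => η.app b g
      naturality := by
        intro z z' f
        ext η
        rfl }
  naturality := by
    intro b b' k
    ext g
    apply NatTrans.ext
    funext z
    ext η
    exact NatTrans.naturality_apply η k g

/-- The canonical comparison map expressing the preservation of the `G`-weighted limit
`{G, Y}` (of the Yoneda embedding, weighted by `G`) by the functor `G * −`. -/
def isbellCompare (G : B ⥤ Type v) :
    CoendB G (coyoneda ⋙ coyoneda.obj (op G)) → (G ⟶ yoneda ⋙ coendBFunctor G) :=
  fun z =>
    { app := fun b => TypeCat.ofHom fun g => (coendBFunctor G).map ((isbellUnit G).app b g) z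
      naturality := by
        intro b b' k
        ext g
        have h : (isbellUnit G).app b' (G.map k g) =
            (isbellUnit G).app b g ≫ yoneda.map k := by
          have h' := NatTrans.naturality_apply (isbellUnit G) k g
          dsimp at h'
          exact h'
        dsimp
        rw [h, Functor.map_comp]
        rfl }

/-! All three conditions say that `G` is a retract of a corepresentable functor `B(b₀, −)`.

An adjunction `f ⊣ g` yields such a retract: its counit at the unit representative `x₀` is a
map `G ⟶ B(b₀, −)`, the point `g₀` gives `B(b₀, −) ⟶ G`, and the second triangle identity says
that they compose to the identity. Conversely, a retract `G ⇄ B(b₀, −)` makes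
`b ↦ [B, Type](G, B(b, −))` a left adjoint, with counit given by evaluation.

`Hom(G, −)` is then a retract of `Hom(B(b₀, −), −) ≅ ev_{b₀}`, hence preserves colimits.
Conversely, `G` is the colimit of the corepresentables over its elements; if `Hom(G, −)`
preserves that colimit, `𝟙 G` factors through one of them.

Finally, a retract gives an explicit inverse of the comparison map
`G * {G, Y} → [B, Type](G, G * Y)`, while a preimage of the element corresponding to `𝟙 G`
under `G * Y(b) ≅ G(b)` is a retract. -/

open Limits

namespace CategoryTheory

section RetractOfFunctors

variable {C D J : Type*} [Category C] [Category D] [Category J]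

lemma colimMap_whiskerLeft_comp_post (K : J ⥤ C) [HasColimit K] {P E : C ⥤ D}
    [HasColimit (K ⋙ P)] [HasColimit (K ⋙ E)] (α : P ⟶ E) :
    colimMap (Functor.whiskerLeft K α) ≫ colimit.post K E =
      colimit.post K P ≫ α.app (colimit K) := by
  ext j
  simp

noncomputable def Retract.retractArrowColimitPost {P E : C ⥤ D} (h : Retract P E) (K : J ⥤ C)
    [HasColimit K] [HasColimit (K ⋙ P)] [HasColimit (K ⋙ E)] :
    RetractArrow (colimit.post K P) (colimit.post K E) where
  i := Arrow.homMk _ _ (colimMap_whiskerLeft_comp_post K h.i)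
  r := Arrow.homMk _ _ (colimMap_whiskerLeft_comp_post K h.r)
  retract := by
    ext
    · dsimp
      ext
      simp [← NatTrans.comp_app_assoc]
    · simp [← NatTrans.comp_app]

lemma Retract.preservesColimitsOfSize [HasColimitsOfSize.{w, w'} C]
    [HasColimitsOfSize.{w, w'} D] {P E : C ⥤ D} (h : Retract P E)
    [PreservesColimitsOfSize.{w, w'} E] : PreservesColimitsOfSize.{w, w'} P where
  preservesColimitsOfShape {_} _ := ⟨fun {K} =>
    have : IsIso (colimit.post K P) :=
      (MorphismProperty.isomorphisms D).of_retract (h.retractArrowColimitPost K)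
        (inferInstanceAs (IsIso (colimit.post K E)))
    preservesColimit_of_isIso_post P K⟩

end RetractOfFunctors

end CategoryTheory

def ProfAdj.retract {F : Bᵒᵖ ⥤ Type v} {G : B ⥤ Type v} (A : ProfAdj F G) :
    Retract G (coyoneda.obj (op A.b₀)) where
  i :=
    { app b := TypeCat.ofHom (A.ε A.x₀)
      naturality b b' k := by
        ext y
        exact A.ε_natr k A.x₀ y }
  r := coyonedaEquiv.symm A.g₀
  retract := by
    ext b y
    exact A.tri₂ b y

namespace CategoryTheory.Retract

variable {G : B ⥤ Type v} {b₀ : B} (h : Retract G (coyoneda.obj (Opposite.op b₀)))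

lemma map_i_app_coyonedaEquiv_r {b : B} (y : G.obj b) :
    G.map (h.i.app b y) (coyonedaEquiv h.r) = y := by
  rw [map_coyonedaEquiv]
  exact ConcreteCategory.congr_hom (congr_app h.retract b) y

lemma i_comp_coyoneda_map {b : B} (x : G ⟶ coyoneda.obj (Opposite.op b)) :
    h.i ≫ coyoneda.map (x.app b₀ (coyonedaEquiv h.r)).op = x := by
  ext c y
  change x.app b₀ (coyonedaEquiv h.r) ≫ h.i.app c y = x.app c y
  conv_rhs => rw [← h.map_i_app_coyonedaEquiv_r y]
  exact (NatTrans.naturality_apply x _ _).symm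

/-- `coyoneda ⋙ coyoneda.obj (op G)` is `b ↦ [B, Type](G, B(b, −))`, the weighted limit
`{G, Y}`. -/
def profAdj : ProfAdj (coyoneda ⋙ coyoneda.obj (Opposite.op G)) G where
  ε x y := x.app _ y
  ε_natl _ _ _ := rfl
  ε_natr k x y := NatTrans.naturality_apply x k y
  b₀ := b₀
  g₀ := coyonedaEquiv h.r
  x₀ := h.i
  tri₁ _ x := h.i_comp_coyoneda_map x
  tri₂ _ := h.map_i_app_coyonedaEquiv_r

end CategoryTheory.Retract

lemma exists_profAdj_iff_exists_retract_coyoneda (G : B ⥤ Type v) :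
    (∃ F : Bᵒᵖ ⥤ Type v, Nonempty (ProfAdj F G)) ↔
      ∃ b₀ : B, Nonempty (Retract G (coyoneda.obj (op b₀))) :=
  ⟨fun ⟨_, ⟨A⟩⟩ => ⟨A.b₀, ⟨A.retract⟩⟩, fun ⟨_, ⟨h⟩⟩ => ⟨_, ⟨h.profAdj⟩⟩⟩

lemma preservesColimits_coyoneda_obj_of_retract {G : B ⥤ Type v} {b₀ : B}
    (h : Retract G (coyoneda.obj (op b₀))) : PreservesColimits (coyoneda.obj (op G)) :=
  have : PreservesColimits (coyoneda.obj (op (coyoneda.obj (op b₀)))) :=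
    preservesColimits_of_natIso (curriedCoyonedaLemma.app b₀).symm
  (h.op.map coyoneda).preservesColimitsOfSize

lemma exists_retract_coyoneda_of_preservesColimits (G : B ⥤ Type v)
    [PreservesColimits (coyoneda.obj (op G))] :
    ∃ b₀ : B, Nonempty (Retract G (coyoneda.obj (op b₀))) := by
  obtain ⟨u, θ, hθ⟩ := Types.jointly_surjective _
    (isColimitOfPreserves (coyoneda.obj (op G))
      (Functor.Elements.isColimitCoconeπOpCompShrinkYonedaFlip G)) (𝟙 G)
  exact ⟨u.unop.fst, ⟨(⟨θ, _, hθ⟩ : Retract G _).trans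
    (((flipFunctor _ _ _).mapIso shrinkYonedaIsoYoneda).app _).retract⟩⟩

section Isbell

variable (G : B ⥤ Type v)

def coendBYonedaEval (b : B) : CoendB G (yoneda.obj b) → G.obj b :=
  Quot.lift (fun p => G.map p.2.2 p.2.1) (by
    rintro ⟨b₁, _, _⟩ ⟨b₂, _, _⟩ ⟨f, g, y, h₁, h₂⟩
    dsimp only at f y h₁ h₂ ⊢
    obtain ⟨hg₁, hx₁⟩ := Prod.mk.inj h₁
    obtain ⟨hg₂, hx₂⟩ := Prod.mk.inj h₂
    rw [hg₁, hx₁, hg₂, hx₂]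
    exact G.map_comp_apply f y g)

def coendBYonedaUnit : G ⟶ yoneda ⋙ coendBFunctor G where
  app b := TypeCat.ofHom fun g => Quot.mk _ ⟨b, g, 𝟙 b⟩
  naturality b b' k := by
    ext g
    exact (Quot.sound ⟨k, g, 𝟙 b', by simp, rfl⟩).symm

lemma coendBYonedaEval_unit {b : B} (g : G.obj b) :
    coendBYonedaEval G b ((coendBYonedaUnit G).app b g) = g :=
  G.map_id_apply b g

lemma exists_retract_coyoneda_of_surjective_isbellCompare
    (hs : Function.Surjective (isbellCompare G)) :
    ∃ b₀ : B, Nonempty (Retract G (coyoneda.obj (op b₀))) := by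
  obtain ⟨z, hz⟩ := hs (coendBYonedaUnit G)
  obtain ⟨⟨b₀, g₀, η₀⟩, rfl⟩ := Quot.exists_rep z
  refine ⟨b₀, ⟨⟨η₀, coyonedaEquiv.symm g₀, ?_⟩⟩⟩
  ext b y
  exact (congrArg (coendBYonedaEval G b) (ConcreteCategory.congr_hom (congr_app hz b) y)).trans
    (coendBYonedaEval_unit G y)

end Isbell

namespace CategoryTheory.Retract

variable {G : B ⥤ Type v} {b₀ : B} (h : Retract G (coyoneda.obj (Opposite.op b₀)))

def isbellCompareInv (α : G ⟶ yoneda ⋙ coendBFunctor G) :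
    CoendB G (coyoneda ⋙ coyoneda.obj (Opposite.op G)) :=
  coendBMap G (yonedaEquiv.symm h.i) (α.app b₀ (coyonedaEquiv h.r))

lemma isbellCompareInv_isbellCompare
    (z : CoendB G (coyoneda ⋙ coyoneda.obj (Opposite.op G))) :
    h.isbellCompareInv (isbellCompare G z) = z := by
  induction z using Quot.ind with | mk p => ?_
  obtain ⟨b₁, g₁, η₁⟩ := p
  exact congrArg (fun η => (Quot.mk _ ⟨b₁, g₁, η⟩ : CoendB G _)) (h.i_comp_coyoneda_map η₁)

lemma isbellCompare_isbellCompareInv (α : G ⟶ yoneda ⋙ coendBFunctor G) :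
    isbellCompare G (h.isbellCompareInv α) = α := by
  ext b g
  have comp_eq (t : CoendB G (yoneda.obj b₀)) :
      (coendBFunctor G).map ((isbellUnit G).app b g) (coendBMap G (yonedaEquiv.symm h.i) t) =
        coendBMap G (yoneda.map (h.i.app b g)) t := by
    induction t using Quot.ind
    rfl
  refine (comp_eq _).trans ?_
  conv_rhs => rw [← h.map_i_app_coyonedaEquiv_r g]
  exact (NatTrans.naturality_apply α _ _).symm

end CategoryTheory.Retract

lemma bijective_isbellCompare_of_retract {G : B ⥤ Type v} {b₀ : B}
    (h : Retract G (coyoneda.obj (op b₀))) : Function.Bijective (isbellCompare G) :=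
  Function.bijective_iff_has_inverse.mpr
    ⟨h.isbellCompareInv, h.isbellCompareInv_isbellCompare, h.isbellCompare_isbellCompareInv⟩

/-- for `G : B ⥤ Type v` (corresponding to a profunctor `g : B ⇸ 𝟙`), the
following are equivalent: (i) `g` has a left adjoint profunctor; (ii) `Hom(G, −)` preserves
all small colimits; (iii) `G * −` preserves the `G`-weighted limit `{G, Y}` of the Yoneda
embedding (expressed by the bijectivity of the canonical comparison map). -/
theorem profunctor_leftAdjoint_tfae (G : B ⥤ Type v) :
    ((∃ F : Bᵒᵖ ⥤ Type v, Nonempty (ProfAdj F G)) ↔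
        Nonempty (Limits.PreservesColimits (coyoneda.obj (op G)))) ∧
      ((∃ F : Bᵒᵖ ⥤ Type v, Nonempty (ProfAdj F G)) ↔
        Function.Bijective (isbellCompare G)) := by
  rw [exists_profAdj_iff_exists_retract_coyoneda]
  refine ⟨⟨?_, ?_⟩, ⟨?_, ?_⟩⟩
  · rintro ⟨_, ⟨h⟩⟩
    exact ⟨preservesColimits_coyoneda_obj_of_retract h⟩
  · rintro ⟨_⟩
    exact exists_retract_coyoneda_of_preservesColimits G
  · rintro ⟨_, ⟨h⟩⟩
    exact bijective_isbellCompare_of_retract h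
  · exact fun hG => exists_retract_coyoneda_of_surjective_isbellCompare G hG.surjective
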